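/- arXiv:0910.2320 — 7 statements merged into one kernel-verified Lean document; each statement's English description precedes it below -/
import Mathlib

section
/- If a probability distribution ρ satisfies detailed balance for the rates W, then for every t ∈ ℝ and all f, g : K → ℝ, ∑_x ρ(x) f(x) (e^{tL} g)(x) = ∑_x ρ(x) g(x) (e^{tL} f)(x); that is, stationary equilibrium two-time correlation functions are time-reversal symmetric. -/
/-!
Detailed balance for `W` is the intertwining relation `diag(ρ) L = Lᵀ diag(ρ)`, i.e. `L` is
self-adjoint for the weighted pairing `⟨u, v⟩_ρ = ∑ ρ u v`. The relation passes to every power of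
`t L`, hence to `e^{tL}`, so `e^{tL}` satisfies detailed balance too, and the two-time correlation
`⟨f, e^{tL} g⟩_ρ` is then symmetric in `f` and `g`.
-/

/-- The generator matrix of the Markov jump process with rates `W`:
entry `W x y` at `(x, y)` for `x ≠ y` and `-∑_{y ≠ x} W x y` on the diagonal. -/
noncomputable def genMatrix {K : Type*} [Fintype K] [DecidableEq K] (W : K → K → ℝ) :
    Matrix K K ℝ :=
  Matrix.of fun x y =>
    if x = y then -∑ z ∈ Finset.univ.filter (fun z => z ≠ x), W x z else W x y

/-- The semigroup `e^{tL}` (matrix exponential of `t • L`). -/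
noncomputable def expL {K : Type*} [Fintype K] [DecidableEq K] (W : K → K → ℝ) (t : ℝ) :
    Matrix K K ℝ :=
  NormedSpace.exp (t • genMatrix W)

open Matrix

def DetailedBalance {n R : Type*} [Mul R] (ρ : n → R) (A : n → n → R) : Prop :=
  ∀ x y, ρ x * A x y = ρ y * A y x

theorem detailedBalance_iff_semiconjBy {n R : Type*} [Fintype n] [DecidableEq n] [CommSemiring R]
    {ρ : n → R} {A : Matrix n n R} :
    DetailedBalance ρ A ↔ SemiconjBy (diagonal ρ) A Aᵀ := by
  simp only [DetailedBalance, SemiconjBy, ← Matrix.ext_iff, diagonal_mul, mul_diagonal,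
    transpose_apply, mul_comm (A _ _) (ρ _)]

theorem Matrix.semiconjBy_exp {m 𝔸 : Type*} [Fintype m] [DecidableEq m] [NormedRing 𝔸]
    [NormedAlgebra ℚ 𝔸] [CompleteSpace 𝔸] {D A B : Matrix m m 𝔸} (h : SemiconjBy D A B) :
    SemiconjBy D (NormedSpace.exp A) (NormedSpace.exp B) :=
  open scoped Norms.Operator in
  -- the operator norm induces the product uniformity, so completeness comes from `m → m → 𝔸`
  @SemiconjBy.exp_right _ _ _ (inferInstanceAs (CompleteSpace (m → m → 𝔸))) _ _ _ h

theorem DetailedBalance.genMatrix {K : Type*} [Fintype K] [DecidableEq K] {W : K → K → ℝ}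
    {ρ : K → ℝ} (hdb : DetailedBalance ρ W) : DetailedBalance ρ (genMatrix W) := by
  intro x y
  by_cases hxy : x = y
  · rw [hxy]
  · simp only [_root_.genMatrix, of_apply, if_neg hxy, if_neg (Ne.symm hxy), hdb x y]

theorem DetailedBalance.expL {K : Type*} [Fintype K] [DecidableEq K] {W : K → K → ℝ}
    {ρ : K → ℝ} (hdb : DetailedBalance ρ W) (t : ℝ) : DetailedBalance ρ (expL W t) := by
  have hL := (detailedBalance_iff_semiconjBy.mp hdb.genMatrix).smul_right t
  rw [← transpose_smul] at hL
  rw [detailedBalance_iff_semiconjBy, _root_.expL, ← exp_transpose]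
  exact Matrix.semiconjBy_exp hL

theorem DetailedBalance.sum_mul_mul_sum_comm {n R : Type*} [Fintype n] [CommSemiring R]
    {ρ : n → R} {P : n → n → R} (hP : DetailedBalance ρ P) (f g : n → R) :
    ∑ x, ρ x * f x * ∑ y, P x y * g y = ∑ x, ρ x * g x * ∑ y, P x y * f y :=
  calc ∑ x, ρ x * f x * ∑ y, P x y * g y
      = ∑ x, ∑ y, ρ x * P x y * (f x * g y) := by
        simp only [Finset.mul_sum]
        exact Finset.sum_congr rfl fun _ _ => Finset.sum_congr rfl fun _ _ => by ring
    _ = ∑ y, ∑ x, ρ y * P y x * (f x * g y) := by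
        rw [Finset.sum_comm]
        exact Finset.sum_congr rfl fun y _ => Finset.sum_congr rfl fun x _ => by rw [hP x y]
    _ = ∑ x, ρ x * g x * ∑ y, P x y * f y := by
        simp only [Finset.mul_sum]
        exact Finset.sum_congr rfl fun _ _ => Finset.sum_congr rfl fun _ _ => by ring

theorem equilibrium_correlations_time_reversal_general
    {K : Type*} [Fintype K] [DecidableEq K]
    (W : K → K → ℝ)
    (ρ : K → ℝ)
    (hdb : ∀ x y : K, ρ x * W x y = ρ y * W y x)
    (t : ℝ) (f g : K → ℝ) :
    ∑ x, ρ x * f x * (∑ y, expL W t x y * g y) =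
      ∑ x, ρ x * g x * (∑ y, expL W t x y * f y) :=
  (DetailedBalance.expL hdb t).sum_mul_mul_sum_comm f g

/-- under detailed balance, stationary two-time correlation functions are
time-reversal symmetric: `∑ x, ρ x * f x * (e^{tL} g) x = ∑ x, ρ x * g x * (e^{tL} f) x`. -/
theorem equilibrium_correlations_time_reversal
    {K : Type*} [Fintype K] [Nonempty K] [DecidableEq K]
    (W : K → K → ℝ) (hW : ∀ x y : K, x ≠ y → 0 ≤ W x y)
    (ρ : K → ℝ) (hρ0 : ∀ x, 0 ≤ ρ x) (hρ1 : ∑ x, ρ x = 1)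
    (hdb : ∀ x y : K, ρ x * W x y = ρ y * W y x)
    (t : ℝ) (f g : K → ℝ) :
    ∑ x, ρ x * f x * (∑ y, expL W t x y * g y) =
      ∑ x, ρ x * g x * (∑ y, expL W t x y * f y) :=
  equilibrium_correlations_time_reversal_general W ρ hdb t f g
end

section
/- Suppose ρ is stationary for W (detailed balance is NOT assumed), let V : K → ℝ and β ∈ ℝ, and take the perturbation with b = 0, a = β, i.e. perturbed rates W_h(x,y) = W(x,y) e^{−β h V(x)}. Then for every h ∈ ℝ the distribution ρ_h(x) = ρ(x) e^{β h V(x)} / Z_h with Z_h = ∑_x ρ(x) e^{β h V(x)} is stationary for W_h (exactly, to all orders in h). -/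
/-- If `ρ` is stationary for `W` (detailed balance NOT assumed) and the
perturbation has `b = 0`, `a = β`, i.e. `W_h x y = W x y * exp (-β h V x)`, then for
every `h` the distribution `ρ_h x = ρ x * exp (β h V x) / Z_h` is stationary for
`W_h`, exactly. -/
theorem perturbation_case2_exact_stationary
    {K : Type*} [Fintype K] [Nonempty K]
    (W : K → K → ℝ) (hW : ∀ x y : K, x ≠ y → 0 ≤ W x y)
    (ρ : K → ℝ) (hρ0 : ∀ x, 0 ≤ ρ x) (hρ1 : ∑ x, ρ x = 1)
    (hstat : ∀ f : K → ℝ, ∑ x, ρ x * (∑ y, W x y * (f y - f x)) = 0)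
    (V : K → ℝ) (β : ℝ) (h : ℝ) :
    ∀ f : K → ℝ,
      ∑ x, (ρ x * Real.exp (β * h * V x) / ∑ z, ρ z * Real.exp (β * h * V z)) *
        (∑ y, (W x y * Real.exp (-(β * h * V x))) * (f y - f x)) = 0 := by
  intro f
  set Z : ℝ := ∑ z, ρ z * Real.exp (β * h * V z) with hZ
  have key : ∀ x : K,
      (ρ x * Real.exp (β * h * V x) / Z) *
        (∑ y, (W x y * Real.exp (-(β * h * V x))) * (f y - f x))
      = (ρ x * (∑ y, W x y * (f y - f x))) / Z := by
    intro x
    have he : Real.exp (β * h * V x) * Real.exp (-(β * h * V x)) = 1 := by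
      rw [← Real.exp_add]; simp
    have hs : ∑ y, (W x y * Real.exp (-(β * h * V x))) * (f y - f x)
        = Real.exp (-(β * h * V x)) * ∑ y, W x y * (f y - f x) := by
      rw [Finset.mul_sum]
      exact Finset.sum_congr rfl fun y _ => by ring
    rw [hs]
    calc ρ x * Real.exp (β * h * V x) / Z *
          (Real.exp (-(β * h * V x)) * ∑ y, W x y * (f y - f x))
        = ρ x * (Real.exp (β * h * V x) * Real.exp (-(β * h * V x))) *
            (∑ y, W x y * (f y - f x)) / Z := by ring
      _ = ρ x * (∑ y, W x y * (f y - f x)) / Z := by rw [he, mul_one]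
  calc ∑ x, (ρ x * Real.exp (β * h * V x) / Z) *
        (∑ y, (W x y * Real.exp (-(β * h * V x))) * (f y - f x))
      = ∑ x, (ρ x * (∑ y, W x y * (f y - f x))) / Z := Finset.sum_congr rfl fun x _ => key x
    _ = (∑ x, ρ x * (∑ y, W x y * (f y - f x))) / Z := by rw [Finset.sum_div]
    _ = 0 := by rw [hstat f, zero_div]
end

section
/- Fix a probability distribution μ on K, functions V, Q : K → ℝ, constants a, b ∈ ℝ, and t ≥ 0. Let μ_s(x) := ∑_z μ(z)(e^{sL})_{z,x} and define the two-time correlation C(s,u) := ∑_x μ_s(x) V(x) (e^{(u−s)L} Q)(x). Then for every 0 ≤ s ≤ t: the function s' ↦ C(s',t) is differentiable at s with some derivative D_s, the function u ↦ C(s,u) is differentiable at t with some derivative D_t, and ∑_x μ_s(x) (L′ (e^{(t−s)L} Q))(x) = b·D_s − a·D_t + b [ ∑_x μ_s(x) V(x) (e^{(t−s)L} (L Q))(x) − ∑_x μ_s(x) (L V)(x) (e^{(t−s)L} Q)(x) ]. (This is the response formula of Proposition 1: the response function R(t,s) equals ∑_x μ_s(x)(L′(e^{(t−s)L}Q))(x).)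 -/
/-- Action of `e^{tL}` on observables: `(e^{tL} f)(x) = ∑ y, (e^{tL})_{x,y} f y`. -/
noncomputable def actE {K : Type*} [Fintype K] [DecidableEq K] (W : K → K → ℝ) (t : ℝ)
    (f : K → ℝ) : K → ℝ :=
  fun x => ∑ y, expL W t x y * f y

/-- Action of `e^{tL}` on distributions: `(μ e^{tL})(x) = ∑ z, μ z (e^{tL})_{z,x}`. -/
noncomputable def muE {K : Type*} [Fintype K] [DecidableEq K] (W : K → K → ℝ) (μ : K → ℝ)
    (t : ℝ) : K → ℝ :=
  fun x => ∑ z, μ z * expL W t z x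

/-- The backward generator acting on observables. -/
noncomputable def genL {K : Type*} [Fintype K] (W : K → K → ℝ) (f : K → ℝ) : K → ℝ :=
  fun x => ∑ y, W x y * (f y - f x)

/-- The linearized perturbation operator
`(L' f)(x) = ∑ y, W x y * (b V y - a V x) * (f y - f x)`. -/
noncomputable def genL' {K : Type*} [Fintype K] (W : K → K → ℝ) (V : K → ℝ) (a b : ℝ)
    (f : K → ℝ) : K → ℝ :=
  fun x => ∑ y, W x y * (b * V y - a * V x) * (f y - f x)

/-- The perturbed rates `W_h x y = W x y * exp (h (b V y - a V x))`. -/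
noncomputable def pertW {K : Type*} (W : K → K → ℝ) (V : K → ℝ) (a b h : ℝ) :
    K → K → ℝ :=
  fun x y => W x y * Real.exp (h * (b * V y - a * V x))

/-! Write `L` for the generator matrix, `μ_s = μ e^{sL}` and `g = e^{(t-s)L} Q`. Since `L`
commutes with `e^{rL}`, `∂_s C(s,t) = ⟨μ_s, L(V g)⟩ - ⟨μ_s, V · L g⟩` (forward equation for `μ_s`,
backward equation for `g`, and duality `⟨μ_s L, h⟩ = ⟨μ_s, L h⟩`) and `∂_t C(s,t) = ⟨μ_s, V · L g⟩`.
Pointwise `L' g = b L(V g) - b (L V) g - a V · L g`, so the formula is a linear identity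
between these three averages. -/

open Matrix

theorem genL'_apply {K : Type*} [Fintype K] (W : K → K → ℝ) (V : K → ℝ) (a b : ℝ)
    (g : K → ℝ) (x : K) :
    genL' W V a b g x
      = b * genL W (V * g) x - b * (genL W V x * g x) - a * (V x * genL W g x) := by
  simp only [genL', genL, Pi.mul_apply, Finset.mul_sum, Finset.sum_mul,
    ← Finset.sum_sub_distrib]
  exact Finset.sum_congr rfl fun y _ => by ring

section Generator

variable {K : Type*} [Fintype K] [DecidableEq K] (W : K → K → ℝ)

theorem genL_eq_mulVec (f : K → ℝ) : genL W f = genMatrix W *ᵥ f := by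
  ext x
  have hoff : ∀ y ∈ Finset.univ.erase x, genMatrix W x y = W x y := fun y hy => by
    simp [genMatrix, (Finset.ne_of_mem_erase hy).symm]
  have hdiag : genMatrix W x x = -∑ y ∈ Finset.univ.erase x, W x y := by
    simp [genMatrix, Finset.filter_ne']
  rw [genL, mulVec, dotProduct, ← Finset.add_sum_erase _ _ (Finset.mem_univ x),
    ← Finset.add_sum_erase _ _ (Finset.mem_univ x), hdiag,
    Finset.sum_congr rfl fun y hy => congrArg (· * f y) (hoff y hy)]
  simp only [sub_self, mul_zero, zero_add, mul_sub, Finset.sum_sub_distrib, ← Finset.sum_mul]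
  ring

theorem actE_eq_mulVec (r : ℝ) (f : K → ℝ) : actE W r f = expL W r *ᵥ f := rfl

theorem muE_eq_vecMul (μ : K → ℝ) (r : ℝ) : muE W μ r = μ ᵥ* expL W r := rfl

theorem genMatrix_commute_expL (r : ℝ) : Commute (genMatrix W) (expL W r) :=
  ((Commute.refl (genMatrix W)).smul_right r).exp_right

theorem actE_genL (r : ℝ) (f : K → ℝ) : actE W r (genL W f) = genL W (actE W r f) := by
  simp only [genL_eq_mulVec, actE_eq_mulVec, mulVec_mulVec, (genMatrix_commute_expL W r).eq]

theorem sum_vecMul_genMatrix_mul (p h : K → ℝ) :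
    ∑ x, (p ᵥ* genMatrix W) x * h x = ∑ x, p x * genL W h x := by
  rw [genL_eq_mulVec]
  exact (dotProduct_mulVec p (genMatrix W) h).symm

end Generator

section Semigroup

attribute [local instance] Matrix.linftyOpNormedAddCommGroup Matrix.linftyOpNormedSpace
  Matrix.linftyOpNormedRing Matrix.linftyOpNormedAlgebra

variable {K : Type*} [Fintype K] [DecidableEq K] (W : K → K → ℝ)

theorem hasDerivAt_expL_apply (r : ℝ) (i j : K) :
    HasDerivAt (fun u => expL W u i j) ((expL W r * genMatrix W) i j) r :=
  ((entryLinearMap ℝ ℝ i j).toContinuousLinearMap.hasFDerivAt.comp_hasDerivAt r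
    (hasDerivAt_exp_smul_const (genMatrix W) r))

theorem hasDerivAt_actE (r : ℝ) (f : K → ℝ) (x : K) :
    HasDerivAt (fun u => actE W u f x) (genL W (actE W r f) x) r := by
  refine (HasDerivAt.fun_sum fun y (_ : y ∈ Finset.univ) =>
    (hasDerivAt_expL_apply W r x y).mul_const (f y)).congr_deriv ?_
  rw [genL_eq_mulVec, actE_eq_mulVec, mulVec_mulVec, ← (genMatrix_commute_expL W r).eq]
  rfl

theorem hasDerivAt_muE (μ : K → ℝ) (r : ℝ) (x : K) :
    HasDerivAt (fun u => muE W μ u x) ((muE W μ r ᵥ* genMatrix W) x) r := by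
  refine (HasDerivAt.fun_sum fun z (_ : z ∈ Finset.univ) =>
    (hasDerivAt_expL_apply W r z x).const_mul (μ z)).congr_deriv ?_
  rw [muE_eq_vecMul, vecMul_vecMul]
  rfl

end Semigroup

section Correlation

variable {K : Type*} [Fintype K] [DecidableEq K] (W : K → K → ℝ) (μ V Q : K → ℝ)

theorem hasDerivAt_correlation_fst (s t : ℝ) :
    HasDerivAt (fun s' => ∑ x, muE W μ s' x * V x * actE W (t - s') Q x)
      (∑ x, muE W μ s x * genL W (V * actE W (t - s) Q) x
        - ∑ x, muE W μ s x * (V x * genL W (actE W (t - s) Q) x)) s := by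
  refine (HasDerivAt.fun_sum fun x (_ : x ∈ Finset.univ) =>
    ((hasDerivAt_muE W μ s x).mul_const (V x)).fun_mul
      ((hasDerivAt_actE W (t - s) Q x).comp_const_sub t s)).congr_deriv ?_
  rw [Finset.sum_add_distrib, ← sum_vecMul_genMatrix_mul]
  simp only [Pi.mul_apply, mul_neg, Finset.sum_neg_distrib, ← sub_eq_add_neg]
  congr 1 <;> exact Finset.sum_congr rfl fun x _ => by ring

theorem hasDerivAt_correlation_snd (s t : ℝ) :
    HasDerivAt (fun u => ∑ x, muE W μ s x * V x * actE W (u - s) Q x)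
      (∑ x, muE W μ s x * (V x * genL W (actE W (t - s) Q) x)) t := by
  refine (HasDerivAt.fun_sum fun x (_ : x ∈ Finset.univ) =>
    ((hasDerivAt_actE W (t - s) Q x).comp_sub_const t s).const_mul
      (muE W μ s x * V x)).congr_deriv ?_
  exact Finset.sum_congr rfl fun x _ => by ring

end Correlation

theorem response_formula_general
    {K : Type*} [Fintype K] [DecidableEq K]
    (W : K → K → ℝ)
    (μ : K → ℝ)
    (V Q : K → ℝ) (a b : ℝ)
    (t : ℝ) (s : ℝ) :
    ∃ Ds Dt : ℝ,
      HasDerivAt (fun s' => ∑ x, muE W μ s' x * V x * actE W (t - s') Q x) Ds s ∧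
      HasDerivAt (fun u => ∑ x, muE W μ s x * V x * actE W (u - s) Q x) Dt t ∧
      ∑ x, muE W μ s x * genL' W V a b (actE W (t - s) Q) x =
        b * Ds - a * Dt
          + b * ((∑ x, muE W μ s x * V x * actE W (t - s) (genL W Q) x)
              - ∑ x, muE W μ s x * genL W V x * actE W (t - s) Q x) := by
  refine ⟨_, _, hasDerivAt_correlation_fst W μ V Q s t,
    hasDerivAt_correlation_snd W μ V Q s t, ?_⟩
  simp only [genL'_apply, actE_genL, Finset.mul_sum, ← Finset.sum_sub_distrib,
    ← Finset.sum_add_distrib]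
  exact Finset.sum_congr rfl fun x _ => by ring

/-- Proposition 1, the response formula: with
`C s u = ∑ x, (μ e^{sL}) x * V x * (e^{(u-s)L} Q) x`, for all `0 ≤ s ≤ t` the partial
derivatives `D_s = ∂_s C(s,t)` and `D_t = ∂_t C(s,t)` exist and the response function
`R(t,s) = ∑ x, (μ e^{sL}) x * (L' (e^{(t-s)L} Q)) x` equals
`b D_s - a D_t + b [⟨V_s (LQ)_t⟩ - ⟨(LV)_s Q_t⟩]`. -/
theorem response_formula
    {K : Type*} [Fintype K] [Nonempty K] [DecidableEq K]
    (W : K → K → ℝ) (hW : ∀ x y : K, x ≠ y → 0 ≤ W x y)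
    (μ : K → ℝ) (hμ0 : ∀ x, 0 ≤ μ x) (hμ1 : ∑ x, μ x = 1)
    (V Q : K → ℝ) (a b : ℝ)
    (t : ℝ) (ht : 0 ≤ t) (s : ℝ) (hs : 0 ≤ s) (hst : s ≤ t) :
    ∃ Ds Dt : ℝ,
      HasDerivAt (fun s' => ∑ x, muE W μ s' x * V x * actE W (t - s') Q x) Ds s ∧
      HasDerivAt (fun u => ∑ x, muE W μ s x * V x * actE W (u - s) Q x) Dt t ∧
      ∑ x, muE W μ s x * genL' W V a b (actE W (t - s) Q) x =
        b * Ds - a * Dt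
          + b * ((∑ x, muE W μ s x * V x * actE W (t - s) (genL W Q) x)
              - ∑ x, muE W μ s x * genL W V x * actE W (t - s) Q x) :=
  response_formula_general W μ V Q a b t s
end

section
/- Fix a probability distribution μ on K, functions V, Q : K → ℝ, constants a, b ∈ ℝ, and t ≥ 0. Then the function h ↦ ∑_x μ(x) (e^{t L_h} Q)(x) is differentiable at h = 0 (in the sense of HasDerivAt) with derivative equal to ∫_0^t ∑_x (μ e^{sL})(x) (L′ (e^{(t−s)L} Q))(x) ds. (Integrated linear response: the expected value of Q at time t under the perturbed dynamics with constant small amplitude h changes, to first order in h, by the time integral of the response function.) -/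
open NormedSpace Matrix

section Slope

variable {E : Type*} [NormedAddCommGroup E] [NormedSpace ℝ E]

theorem Continuous.update_slope {f : ℝ → E} {f' : E} {x : ℝ} (hf : Continuous f)
    (hf' : HasDerivAt f f' x) : Continuous (Function.update (slope f x) x f') := by
  refine continuous_iff_continuousAt.2 fun y => ?_
  rcases eq_or_ne y x with rfl | hyx
  · exact continuousAt_update_same.2 (hasDerivAt_iff_tendsto_slope.1 hf')
  · rw [continuousAt_update_of_ne hyx,
      show slope f x = fun z => (z - x)⁻¹ • (f z - f x) from funext (slope_def_module f x)]
    exact (((continuous_id.sub continuous_const).continuousAt).inv₀ (sub_ne_zero.2 hyx)).smul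
      (hf.sub continuous_const).continuousAt

end Slope

section Duhamel

variable {𝔸 : Type*} [NormedRing 𝔸] [NormedAlgebra ℝ 𝔸] [CompleteSpace 𝔸]

@[fun_prop]
theorem continuous_exp_of_normedAlgebra_real : Continuous (exp : 𝔸 → 𝔸) :=
  continuous_iff_continuousAt.2 fun x => (exp_analytic (𝕂 := ℝ) x).continuousAt

theorem exp_smul_sub_exp_smul_eq_integral (A B : 𝔸) (t : ℝ) :
    exp (t • B) - exp (t • A) = ∫ s in 0..t, exp (s • B) * (B - A) * exp ((t - s) • A) := by
  have hderiv (s : ℝ) : HasDerivAt (fun u : ℝ => exp (u • B) * exp ((t - u) • A))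
      (exp (s • B) * (B - A) * exp ((t - s) • A)) s := by
    have hA : HasDerivAt (fun u : ℝ => exp ((t - u) • A))
        ((-1 : ℝ) • (A * exp ((t - s) • A))) s :=
      (hasDerivAt_exp_smul_const' A (t - s)).scomp s ((hasDerivAt_id s).const_sub t)
    refine ((hasDerivAt_exp_smul_const B s).mul hA).congr_deriv ?_
    simp only [neg_one_smul, mul_neg, mul_sub, sub_mul, mul_assoc, ← sub_eq_add_neg]
  have hcont : Continuous fun s : ℝ => exp (s • B) * (B - A) * exp ((t - s) • A) := by fun_prop
  rw [intervalIntegral.integral_eq_sub_of_hasDerivAt (fun s _ => hderiv s)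
    (hcont.intervalIntegrable 0 t)]
  simp

theorem hasDerivAt_exp_const_smul_comp {B : ℝ → 𝔸} {B' : 𝔸} {h₀ : ℝ} (hB : Continuous B)
    (hB' : HasDerivAt B B' h₀) (t : ℝ) :
    HasDerivAt (fun h => exp (t • B h))
      (∫ s in 0..t, exp (s • B h₀) * B' * exp ((t - s) • B h₀)) h₀ := by
  set S := Function.update (slope B h₀) h₀ B'
  set G : ℝ → 𝔸 := fun h => ∫ s in 0..t, exp (s • B h) * S h * exp ((t - s) • B h₀)
  have hG : Continuous G := by
    have hS := hB.update_slope hB'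
    exact intervalIntegral.continuous_parametric_intervalIntegral_of_continuous' (by fun_prop) 0 t
  have hslope : ∀ h ≠ h₀, slope (fun h => exp (t • B h)) h₀ h = G h := by
    intro h hh
    simp only [G, S, Function.update_of_ne hh, slope_def_module,
      exp_smul_sub_exp_smul_eq_integral, ← intervalIntegral.integral_smul, mul_smul_comm,
      smul_mul_assoc]
  have hG₀ : G h₀ = ∫ s in 0..t, exp (s • B h₀) * B' * exp ((t - s) • B h₀) := by simp [G, S]
  rw [hasDerivAt_iff_tendsto_slope, ← hG₀]
  exact (hG.tendsto h₀).mono_left nhdsWithin_le_nhds |>.congr' <|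
    eventually_nhdsWithin_of_forall fun h hh => (hslope h hh).symm

end Duhamel

section Generator

variable {K : Type*} [Fintype K] [DecidableEq K]

theorem genMatrix_mulVec (W : K → K → ℝ) (f : K → ℝ) : genMatrix W *ᵥ f = genL W f := by
  ext x
  simp only [mulVec, dotProduct, genL, genMatrix, of_apply]
  rw [← Finset.add_sum_erase _ _ (Finset.mem_univ x),
    ← Finset.add_sum_erase _ _ (Finset.mem_univ x), Finset.filter_ne', if_pos rfl, sub_self,
    mul_zero, zero_add, neg_mul, Finset.sum_mul, neg_add_eq_sub, ← Finset.sum_sub_distrib]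
  refine Finset.sum_congr rfl fun y hy => ?_
  rw [if_neg (Finset.ne_of_mem_erase hy).symm, mul_sub]

noncomputable def genMatrixLinearMap : (K → K → ℝ) →ₗ[ℝ] Matrix K K ℝ where
  toFun := genMatrix
  map_add' W₁ W₂ := by
    ext x y
    by_cases hxy : x = y <;> simp [genMatrix, hxy, Finset.sum_add_distrib]; ring
  map_smul' c W := by
    ext x y
    by_cases hxy : x = y <;> simp [genMatrix, hxy, Finset.mul_sum]

end Generator

section Perturbation

variable {K : Type*} (W : K → K → ℝ) (V : K → ℝ) (a b : ℝ)

def linPertW : K → K → ℝ := fun x y => W x y * (b * V y - a * V x)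

theorem pertW_zero : pertW W V a b 0 = W := by
  funext x y
  simp [pertW]

theorem hasDerivAt_pertW [Fintype K] (h : ℝ) :
    HasDerivAt (pertW W V a b)
      (fun x y => linPertW W V a b x y * Real.exp (h * (b * V y - a * V x))) h := by
  refine hasDerivAt_pi.2 fun x => hasDerivAt_pi.2 fun y => ?_
  refine ((((hasDerivAt_id' h).mul_const (b * V y - a * V x)).exp).const_mul
    (W x y)).congr_deriv ?_
  simp only [linPertW, one_mul]
  ring

theorem continuous_pertW [Fintype K] : Continuous (pertW W V a b) :=
  continuous_iff_continuousAt.2 fun h => (hasDerivAt_pertW W V a b h).continuousAt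

end Perturbation

section Response

variable {K : Type*} [Fintype K] [DecidableEq K] (W : K → K → ℝ) (V : K → ℝ) (a b : ℝ)

theorem sum_muE_mul_genL'_actE (μ f : K → ℝ) (s r : ℝ) :
    ∑ x, muE W μ s x * genL' W V a b (actE W r f) x
      = μ ⬝ᵥ ((expL W s * genMatrix (linPertW W V a b) * expL W r) *ᵥ f) := by
  -- `muE`, `actE` and `genL'` are `ᵥ*`, `*ᵥ` and `genL (linPertW W V a b)` by definition.
  change (μ ᵥ* expL W s) ⬝ᵥ genL (linPertW W V a b) (expL W r *ᵥ f) = _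
  rw [← genMatrix_mulVec, ← dotProduct_mulVec, mulVec_mulVec, mulVec_mulVec]

-- Any submultiplicative norm would do: it only supplies the Banach algebra structure for `exp`.
attribute [local instance] Matrix.linftyOpNormedRing Matrix.linftyOpNormedAlgebra

theorem hasDerivAt_dotProduct_expL_pertW_mulVec (μ Q : K → ℝ) (t : ℝ) :
    HasDerivAt (fun h => μ ⬝ᵥ (expL (pertW W V a b h) t *ᵥ Q))
      (∫ s in 0..t, μ ⬝ᵥ ((expL W s * genMatrix (linPertW W V a b) * expL W (t - s)) *ᵥ Q)) 0 := by
  let ℓ : Matrix K K ℝ →ₗ[ℝ] ℝ :=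
    { toFun := fun M => μ ⬝ᵥ (M *ᵥ Q)
      map_add' := fun M N => by simp only [add_mulVec, dotProduct_add]
      map_smul' := fun c M => by simp only [smul_mulVec, dotProduct_smul, RingHom.id_apply] }
  let G : (K → K → ℝ) →L[ℝ] Matrix K K ℝ := LinearMap.toContinuousLinearMap genMatrixLinearMap
  have hexp := hasDerivAt_exp_const_smul_comp (G.continuous.comp (continuous_pertW W V a b))
    (G.hasFDerivAt.comp_hasDerivAt 0 (hasDerivAt_pertW W V a b 0)) t
  simp only [Function.comp_apply, pertW_zero, zero_mul, Real.exp_zero, mul_one] at hexp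
  have := (ℓ.toContinuousLinearMap.hasFDerivAt).comp_hasDerivAt 0 hexp
  rw [← ℓ.toContinuousLinearMap.intervalIntegral_comp_comm ?_] at this
  · exact this
  · exact Continuous.intervalIntegrable (by fun_prop) 0 t

end Response

theorem integrated_linear_response_general
    {K : Type*} [Fintype K] [DecidableEq K]
    (W : K → K → ℝ)
    (μ : K → ℝ)
    (V Q : K → ℝ) (a b : ℝ) (t : ℝ) :
    HasDerivAt
      (fun h : ℝ => ∑ x, μ x * ∑ y, expL (pertW W V a b h) t x y * Q y)
      (∫ s in (0:ℝ)..t, ∑ x, muE W μ s x * genL' W V a b (actE W (t - s) Q) x) 0 := by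
  simp only [sum_muE_mul_genL'_actE]
  exact hasDerivAt_dotProduct_expL_pertW_mulVec W V a b μ Q t

/-- integrated linear response: for a constant small amplitude `h`, the
map `h ↦ ∑ x, μ x * (e^{t L_h} Q) x` is differentiable at `h = 0`, with derivative the
time integral `∫_0^t ∑ x, (μ e^{sL}) x * (L' (e^{(t-s)L} Q)) x ds` of the response
function. -/
theorem integrated_linear_response
    {K : Type*} [Fintype K] [Nonempty K] [DecidableEq K]
    (W : K → K → ℝ) (hW : ∀ x y : K, x ≠ y → 0 ≤ W x y)
    (μ : K → ℝ) (hμ0 : ∀ x, 0 ≤ μ x) (hμ1 : ∑ x, μ x = 1)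
    (V Q : K → ℝ) (a b : ℝ) (t : ℝ) (ht : 0 ≤ t) :
    HasDerivAt
      (fun h : ℝ => ∑ x, μ x * ∑ y, expL (pertW W V a b h) t x y * Q y)
      (∫ s in (0:ℝ)..t, ∑ x, muE W μ s x * genL' W V a b (actE W (t - s) Q) x) 0 :=
  integrated_linear_response_general W μ V Q a b t
end

section
/- Suppose ρ is stationary for W. Let V, M : K → ℝ, a, b ∈ ℝ, and let ν : ℝ → (K → ℝ) satisfy: ν_0 = ρ; for each h, ν_h is a probability distribution stationary for the perturbed rates W_h(x,y) = W(x,y) e^{h(b V(y) − a V(x))}; and for each x ∈ K the map h ↦ ν_h(x) is differentiable at 0. Then the function h ↦ ∑_x ν_h(x) (L M)(x) is differentiable at h = 0 with derivative χ^{ab}_{MV} = b ∑_x ρ(x) M(x) (L V)(x) + a ∑_x ρ(x) V(x) (L M)(x). (Proposition 2, stationary response formula.) -/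
/-!
Stationarity of `ν h` for the perturbed rates lets one rewrite `∑ₓ ν h x (L M)(x)` as
`-∑ₓ,ᵧ ν h x W(x,y) (e^{h (b V y - a V x)} - 1) (M y - M x)`. Each summand is `ν h x` times a
function vanishing at `h = 0`, so only the derivative of the exponential contributes and the
unknown derivative of `ν` drops out. Finally, stationarity of `ρ` applied to `V M` turns
`-∑ ρ(x) W(x,y) (b V y - a V x)(M y - M x)` into `b ⟨M LV⟩_ρ + a ⟨V LM⟩_ρ`.
-/

open Finset

namespace MarkovJump

variable {K : Type*} [Fintype K]

def generator (W : K → K → ℝ) (f : K → ℝ) (x : K) : ℝ := ∑ y, W x y * (f y - f x)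

theorem sum_mul_generator_eq_of_sum_mul_generator_mul_eq_zero (W g : K → K → ℝ) (μ f : K → ℝ)
    (hμ : ∑ x, μ x * generator (fun x y => W x y * g x y) f x = 0) :
    ∑ x, μ x * generator W f x =
      -∑ x, ∑ y, μ x * ((g x y - 1) * (W x y * (f y - f x))) := by
  rw [← sub_eq_zero, sub_neg_eq_add, ← hμ]
  simp only [generator, mul_sum, ← sum_add_distrib]
  exact sum_congr rfl fun x _ => sum_congr rfl fun y _ => by ring

theorem hasDerivAt_sum_mul_exp_sub_one (ν : ℝ → K → ℝ) (c g : K → K → ℝ)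
    (hν : ∀ x, DifferentiableAt ℝ (fun h => ν h x) 0) :
    HasDerivAt (fun h => ∑ x, ∑ y, ν h x * ((Real.exp (h * c x y) - 1) * g x y))
      (∑ x, ∑ y, ν 0 x * (c x y * g x y)) 0 := by
  refine HasDerivAt.fun_sum fun x _ => HasDerivAt.fun_sum fun y _ => ?_
  have hexp : HasDerivAt (fun h => (Real.exp (h * c x y) - 1) * g x y) (c x y * g x y) 0 := by
    simpa using (((hasDerivAt_mul_const (x := 0) (c x y)).exp).sub_const 1).mul_const (g x y)
  refine ((hν x).hasDerivAt.fun_mul hexp).congr_deriv ?_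
  simp

theorem neg_sum_perturbation_eq_of_stationary (W : K → K → ℝ) (ρ : K → ℝ)
    (hρ : ∀ f, ∑ x, ρ x * generator W f x = 0) (V M : K → ℝ) (a b : ℝ) :
    -∑ x, ∑ y, ρ x * ((b * V y - a * V x) * (W x y * (M y - M x))) =
      b * ∑ x, ρ x * M x * generator W V x + a * ∑ x, ρ x * V x * generator W M x := by
  -- `(b V y - a V x)(M y - M x) = b (VM y - VM x) - b M x (V y - V x) - a V x (M y - M x)`
  have hVM := hρ (V * M)
  rw [eq_comm, ← sub_eq_zero, ← mul_eq_zero_of_right b hVM]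
  simp only [generator, Pi.mul_apply, mul_sum, ← sum_neg_distrib, ← sum_add_distrib,
    ← sum_sub_distrib]
  exact sum_congr rfl fun x _ => sum_congr rfl fun y _ => by ring

end MarkovJump

open MarkovJump in
theorem stationary_response_chi_general
    {K : Type*} [Fintype K]
    (W : K → K → ℝ)
    (ρ : K → ℝ)
    (hstat : ∀ f : K → ℝ, ∑ x, ρ x * (∑ y, W x y * (f y - f x)) = 0)
    (V M : K → ℝ) (a b : ℝ)
    (ν : ℝ → K → ℝ) (hν0 : ν 0 = ρ)
    (hνstat : ∀ h : ℝ, ∀ f : K → ℝ,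
      ∑ x, ν h x * (∑ y, (W x y * Real.exp (h * (b * V y - a * V x))) * (f y - f x)) = 0)
    (hνdiff : ∀ x, DifferentiableAt ℝ (fun h => ν h x) 0) :
    HasDerivAt (fun h => ∑ x, ν h x * (∑ y, W x y * (M y - M x)))
      (b * ∑ x, ρ x * M x * (∑ y, W x y * (V y - V x))
        + a * ∑ x, ρ x * V x * (∑ y, W x y * (M y - M x))) 0 := by
  have hrewrite : (fun h => ∑ x, ν h x * generator W M x) = fun h =>
      -∑ x, ∑ y, ν h x * ((Real.exp (h * (b * V y - a * V x)) - 1) * (W x y * (M y - M x))) :=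
    funext fun h => sum_mul_generator_eq_of_sum_mul_generator_mul_eq_zero W _ (ν h) M (hνstat h M)
  have hderiv := (hasDerivAt_sum_mul_exp_sub_one ν (fun x y => b * V y - a * V x)
    (fun x y => W x y * (M y - M x)) hνdiff).neg
  rw [hν0, neg_sum_perturbation_eq_of_stationary W ρ hstat V M a b] at hderiv
  exact hrewrite ▸ hderiv

/-- Proposition 2, stationary response formula: if `ρ` is stationary for
`W` and `ν h` is a smooth-at-`0` family of stationary probability distributions for the
perturbed rates `W_h x y = W x y * exp (h (b V y - a V x))` with `ν 0 = ρ`, then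
`h ↦ ∑ x, ν h x * (L M) x` is differentiable at `0` with derivative
`χ^{ab}_{MV} = b ⟨M LV⟩_ρ + a ⟨V LM⟩_ρ`. -/
theorem stationary_response_chi
    {K : Type*} [Fintype K] [Nonempty K]
    (W : K → K → ℝ) (hW : ∀ x y : K, x ≠ y → 0 ≤ W x y)
    (ρ : K → ℝ) (hρ0 : ∀ x, 0 ≤ ρ x) (hρ1 : ∑ x, ρ x = 1)
    (hstat : ∀ f : K → ℝ, ∑ x, ρ x * (∑ y, W x y * (f y - f x)) = 0)
    (V M : K → ℝ) (a b : ℝ)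
    (ν : ℝ → K → ℝ) (hν0 : ν 0 = ρ)
    (hνprob : ∀ h : ℝ, (∀ x, 0 ≤ ν h x) ∧ ∑ x, ν h x = 1)
    (hνstat : ∀ h : ℝ, ∀ f : K → ℝ,
      ∑ x, ν h x * (∑ y, (W x y * Real.exp (h * (b * V y - a * V x))) * (f y - f x)) = 0)
    (hνdiff : ∀ x, DifferentiableAt ℝ (fun h => ν h x) 0) :
    HasDerivAt (fun h => ∑ x, ν h x * (∑ y, W x y * (M y - M x)))
      (b * ∑ x, ρ x * M x * (∑ y, W x y * (V y - V x))
        + a * ∑ x, ρ x * V x * (∑ y, W x y * (M y - M x))) 0 :=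
  stationary_response_chi_general W ρ hstat V M a b ν hν0 hνstat hνdiff
end

section
/- Suppose ρ is stationary for W, and let V, M : K → ℝ and a, b ∈ ℝ. Let ν : ℝ → (K → ℝ) be a family with ν_0 = ρ, each ν_h a probability distribution stationary for the rates W(x,y) e^{h(b V(y) − a V(x))}, and h ↦ ν_h(x) differentiable at 0 for each x; let κ : ℝ → (K → ℝ) be a family with κ_0 = ρ, each κ_h a probability distribution stationary for the rates W(x,y) e^{h(a M(y) − b M(x))}, and h ↦ κ_h(x) differentiable at 0 for each x. Then the derivative at h = 0 of h ↦ ∑_x ν_h(x)(L M)(x) equals the derivative at h = 0 of h ↦ ∑_x κ_h(x)(L V)(x); that is, the stationary response functions obey the reciprocity symmetry χ^{ab}_{MV} = χ^{ba}_{VM}. -/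
/-!
Differentiating the stationarity identity `∑ₓ ν_h(x) (L_h f)(x) = 0` of the tilted rates
`W(x,y) e^{h c(x,y)}` at `h = 0` expresses the linear response `∑ₓ ν'_0(x) (L f)(x)` as
`-∑ₓ ρ(x) ∑_y W(x,y) c(x,y) (f(y) - f(x))`. For the two tilts of the theorem the integrands
differ by `(b - a) W(x,y) ((VM)(y) - (VM)(x))`, whose `ρ`-average vanishes by stationarity
of `ρ` applied to `f = VM`.
-/

open Finset

namespace MarkovGenerator

variable {K : Type*} [Fintype K]

def generator (W : K → K → ℝ) (f : K → ℝ) (x : K) : ℝ :=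
  ∑ y, W x y * (f y - f x)

theorem hasDerivAt_sum_mul {μ : ℝ → K → ℝ} {t : ℝ}
    (hμ : ∀ x, DifferentiableAt ℝ (fun h => μ h x) t) (g : K → ℝ) :
    HasDerivAt (fun h => ∑ x, μ h x * g x) (∑ x, deriv (fun h => μ h x) t * g x) t :=
  HasDerivAt.fun_sum fun x _ => (hμ x).hasDerivAt.mul_const (g x)

theorem hasDerivAt_generator_tilt (W c : K → K → ℝ) (f : K → ℝ) (x : K) (t : ℝ) :
    HasDerivAt (fun h => generator (fun x y => W x y * Real.exp (h * c x y)) f x)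
      (∑ y, W x y * (Real.exp (t * c x y) * c x y) * (f y - f x)) t :=
  HasDerivAt.fun_sum fun y _ =>
    (((hasDerivAt_mul_const (c x y)).exp).const_mul (W x y)).mul_const (f y - f x)

theorem sum_deriv_mul_generator_eq_neg {W c : K → K → ℝ} {μ : ℝ → K → ℝ} (f : K → ℝ)
    (hμ : ∀ x, DifferentiableAt ℝ (fun h => μ h x) 0)
    (hstat : ∀ h, ∑ x, μ h x * generator (fun x y => W x y * Real.exp (h * c x y)) f x = 0) :
    ∑ x, deriv (fun h => μ h x) 0 * generator W f x =
      -∑ x, μ 0 x * ∑ y, W x y * c x y * (f y - f x) := by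
  have hprod : HasDerivAt
      (fun h => ∑ x, μ h x * generator (fun x y => W x y * Real.exp (h * c x y)) f x) _ 0 :=
    HasDerivAt.fun_sum fun x _ => (hμ x).hasDerivAt.mul (hasDerivAt_generator_tilt W c f x 0)
  have hzero := hprod.unique (by simpa only [hstat] using hasDerivAt_const (0 : ℝ) (0 : ℝ))
  simp only [zero_mul, Real.exp_zero, mul_one, one_mul, sum_add_distrib] at hzero
  linarith

theorem sum_mul_sum_tilt_swap {W : K → K → ℝ} {ρ : K → ℝ}
    (hstat : ∀ f, ∑ x, ρ x * generator W f x = 0) (V M : K → ℝ) (a b : ℝ) :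
    ∑ x, ρ x * ∑ y, W x y * (b * V y - a * V x) * (M y - M x) =
      ∑ x, ρ x * ∑ y, W x y * (a * M y - b * M x) * (V y - V x) := by
  have h := congrArg ((b - a) * ·) (hstat (V * M))
  simp only [generator, mul_zero, mul_sum, Pi.mul_apply] at h
  rw [← sub_eq_zero, ← h, ← sum_sub_distrib]
  refine sum_congr rfl fun x _ => ?_
  rw [← mul_sub, ← sum_sub_distrib, mul_sum]
  refine sum_congr rfl fun y _ => ?_
  ring

end MarkovGenerator

open MarkovGenerator

theorem reciprocity_symmetry_general
    {K : Type*} [Fintype K]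
    (W : K → K → ℝ)
    (ρ : K → ℝ)
    (hstat : ∀ f : K → ℝ, ∑ x, ρ x * (∑ y, W x y * (f y - f x)) = 0)
    (V M : K → ℝ) (a b : ℝ)
    (ν : ℝ → K → ℝ) (hν0 : ν 0 = ρ)
    (hνstat : ∀ h : ℝ, ∀ f : K → ℝ,
      ∑ x, ν h x * (∑ y, (W x y * Real.exp (h * (b * V y - a * V x))) * (f y - f x)) = 0)
    (hνdiff : ∀ x, DifferentiableAt ℝ (fun h => ν h x) 0)
    (κ : ℝ → K → ℝ) (hκ0 : κ 0 = ρ)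
    (hκstat : ∀ h : ℝ, ∀ f : K → ℝ,
      ∑ x, κ h x * (∑ y, (W x y * Real.exp (h * (a * M y - b * M x))) * (f y - f x)) = 0)
    (hκdiff : ∀ x, DifferentiableAt ℝ (fun h => κ h x) 0) :
    deriv (fun h => ∑ x, ν h x * (∑ y, W x y * (M y - M x))) 0 =
      deriv (fun h => ∑ x, κ h x * (∑ y, W x y * (V y - V x))) 0 := by
  change deriv (fun h => ∑ x, ν h x * generator W M x) 0 =
    deriv (fun h => ∑ x, κ h x * generator W V x) 0
  rw [(hasDerivAt_sum_mul hνdiff _).deriv, (hasDerivAt_sum_mul hκdiff _).deriv,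
    sum_deriv_mul_generator_eq_neg M hνdiff (hνstat · M),
    sum_deriv_mul_generator_eq_neg V hκdiff (hκstat · V), hν0, hκ0,
    sum_mul_sum_tilt_swap hstat]

/-- reciprocity symmetry `χ^{ab}_{MV} = χ^{ba}_{VM}`: with `ν h` the
stationary distributions for the rates perturbed by `V` with constants `(a, b)`, and
`κ h` those for the rates perturbed by `M` with constants `(b, a)` interchanged, the
derivative at `h = 0` of `h ↦ ∑ x, ν h x * (L M) x` equals the derivative at `h = 0`
of `h ↦ ∑ x, κ h x * (L V) x`. -/
theorem reciprocity_symmetry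
    {K : Type*} [Fintype K] [Nonempty K]
    (W : K → K → ℝ) (hW : ∀ x y : K, x ≠ y → 0 ≤ W x y)
    (ρ : K → ℝ) (hρ0 : ∀ x, 0 ≤ ρ x) (hρ1 : ∑ x, ρ x = 1)
    (hstat : ∀ f : K → ℝ, ∑ x, ρ x * (∑ y, W x y * (f y - f x)) = 0)
    (V M : K → ℝ) (a b : ℝ)
    (ν : ℝ → K → ℝ) (hν0 : ν 0 = ρ)
    (hνprob : ∀ h : ℝ, (∀ x, 0 ≤ ν h x) ∧ ∑ x, ν h x = 1)
    (hνstat : ∀ h : ℝ, ∀ f : K → ℝ,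
      ∑ x, ν h x * (∑ y, (W x y * Real.exp (h * (b * V y - a * V x))) * (f y - f x)) = 0)
    (hνdiff : ∀ x, DifferentiableAt ℝ (fun h => ν h x) 0)
    (κ : ℝ → K → ℝ) (hκ0 : κ 0 = ρ)
    (hκprob : ∀ h : ℝ, (∀ x, 0 ≤ κ h x) ∧ ∑ x, κ h x = 1)
    (hκstat : ∀ h : ℝ, ∀ f : K → ℝ,
      ∑ x, κ h x * (∑ y, (W x y * Real.exp (h * (a * M y - b * M x))) * (f y - f x)) = 0)
    (hκdiff : ∀ x, DifferentiableAt ℝ (fun h => κ h x) 0) :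
    deriv (fun h => ∑ x, ν h x * (∑ y, W x y * (M y - M x))) 0 =
      deriv (fun h => ∑ x, κ h x * (∑ y, W x y * (V y - V x))) 0 :=
  reciprocity_symmetry_general W ρ hstat V M a b ν hν0 hνstat hνdiff κ hκ0 hκstat hκdiff
end

section
/- Let b ∈ ℝ and V : K → ℝ, and let μ : ℝ → (K → ℝ) be a family such that for each h ∈ ℝ, μ_h is a probability distribution stationary for the perturbed rates W(x,y) e^{(b h / 2)(V(y) − V(x))}. Define F(h) := ∑_{x,y} μ_h(x) W(x,y) (1 − e^{(b h / 2)(V(y) − V(x))}). Then the function h ↦ F(h) + (b h / 4) ∑_x μ_h(x) (L V)(x) is o(h²) as h → 0 (little-o in the sense of Asymptotics.IsLittleO at 0 with respect to h²). (This is the content of Proposition 3: the dynamical fluctuation functional satisfies I(μ_h) = −(b h / 4) ∑_x μ_h(x)(LV)(x) + o(h²).) -/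
/-!
Testing the stationarity of `μ h` against `f = V` adds a zero term that turns
`F h + (b h / 4) ∑ₓ μ h x (L V) x` into `∑ₓ,ᵧ μ h x W x y E(uₓᵧ)`, where `uₓᵧ = (b h / 2)(V y - V x)`
and `E(u) = u/2 (1 + eᵘ) - (eᵘ - 1)` is the error of the trapezoidal rule for `∫₀ᵘ eᵗ dt`.
That error is `O(u³)`, and `μ h` stays in the simplex, so the sum is `O(h³) = o(h²)`.
-/

open Asymptotics Filter Topology

noncomputable def expTrapezoidError (u : ℝ) : ℝ :=
  u / 2 * (1 + Real.exp u) - (Real.exp u - 1)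

lemma abs_expTrapezoidError_le {u : ℝ} (hu : |u| ≤ 1) : |expTrapezoidError u| ≤ |u| ^ 3 := by
  set r := Real.exp u - (1 + u + u ^ 2 / 2) with hr
  have hr_le : |r| ≤ |u| ^ 3 * (2 / 9) := by
    have := Real.exp_bound hu (n := 3) (by norm_num)
    norm_num [Finset.sum_range_succ, Nat.factorial] at this
    rw [hr]; convert this using 2
  have hsplit : expTrapezoidError u = u ^ 3 / 4 + (u / 2 - 1) * r := by
    rw [expTrapezoidError, hr]; ring
  have hcoeff : |u / 2 - 1| ≤ 3 / 2 := by
    rw [abs_le] at hu ⊢; constructor <;> linarith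
  calc |expTrapezoidError u|
      ≤ |u ^ 3 / 4| + |(u / 2 - 1) * r| := hsplit ▸ abs_add_le _ _
    _ = |u| ^ 3 / 4 + |u / 2 - 1| * |r| := by rw [abs_mul, abs_div, abs_pow]; norm_num
    _ ≤ |u| ^ 3 / 4 + 3 / 2 * (|u| ^ 3 * (2 / 9)) := by gcongr
    _ ≤ |u| ^ 3 := by nlinarith [pow_nonneg (abs_nonneg u) 3]

lemma expTrapezoidError_isBigO : expTrapezoidError =O[𝓝 0] fun u ↦ u ^ 3 := by
  refine IsBigO.of_bound 1 ?_
  filter_upwards [Metric.closedBall_mem_nhds (0 : ℝ) one_pos] with u hu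
  rw [Metric.mem_closedBall, dist_zero_right, Real.norm_eq_abs] at hu
  simpa [Real.norm_eq_abs, abs_pow] using abs_expTrapezoidError_le hu

lemma expTrapezoidError_comp_const_mul_isLittleO (c : ℝ) :
    (fun h ↦ expTrapezoidError (c * h)) =o[𝓝 0] fun h ↦ h ^ 2 := by
  have hlin : Tendsto (fun h : ℝ ↦ c * h) (𝓝 0) (𝓝 0) := by
    simpa using (continuous_const_mul c).tendsto 0
  have hcube : (fun h : ℝ ↦ (c * h) ^ 3) =O[𝓝 0] fun h ↦ h ^ 3 := by
    simpa [mul_pow] using (isBigO_refl (fun h : ℝ ↦ h ^ 3) _).const_mul_left (c ^ 3)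
  exact ((expTrapezoidError_isBigO.comp_tendsto hlin).trans hcube).trans_isLittleO
    (isLittleO_pow_pow (by norm_num))

lemma sum_one_sub_exp_add_half_mul_generator_eq {K : Type*} [Fintype K]
    (μ : K → ℝ) (W : K → K → ℝ) (V : K → ℝ) (s : ℝ)
    (hstat : ∑ x, μ x * ∑ y, (W x y * Real.exp (s * (V y - V x))) * (V y - V x) = 0) :
    (∑ x, ∑ y, μ x * W x y * (1 - Real.exp (s * (V y - V x))))
        + s / 2 * ∑ x, μ x * ∑ y, W x y * (V y - V x)
      = ∑ x, ∑ y, μ x * W x y * expTrapezoidError (s * (V y - V x)) := by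
  rw [← add_zero (_ + _), ← mul_zero (s / 2), ← hstat]
  simp only [Finset.mul_sum, ← Finset.sum_add_distrib]
  refine Finset.sum_congr rfl fun x _ ↦ Finset.sum_congr rfl fun y _ ↦ ?_
  rw [expTrapezoidError]; ring

lemma isBigO_one_of_forall_mem_stdSimplex {α K : Type*} [Fintype K] {l : Filter α}
    {μ : α → K → ℝ} (hμ : ∀ h, μ h ∈ stdSimplex ℝ K) (x : K) :
    (fun h ↦ μ h x) =O[l] fun _ ↦ (1 : ℝ) := by
  refine IsBigO.of_bound 1 (Eventually.of_forall fun h ↦ ?_)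
  obtain ⟨h0, h1⟩ := mem_Icc_of_mem_stdSimplex (hμ h) x
  simpa [abs_of_nonneg h0] using h1

theorem dynamical_fluctuation_functional_expansion_general
    {K : Type*} [Fintype K]
    (W : K → K → ℝ)
    (b : ℝ) (V : K → ℝ)
    (μ : ℝ → K → ℝ)
    (hμprob : ∀ h : ℝ, (∀ x, 0 ≤ μ h x) ∧ ∑ x, μ h x = 1)
    (hμstat : ∀ h : ℝ, ∀ f : K → ℝ,
      ∑ x, μ h x *
        (∑ y, (W x y * Real.exp (b * h / 2 * (V y - V x))) * (f y - f x)) = 0) :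
    (fun h : ℝ =>
        (∑ x, ∑ y, μ h x * W x y * (1 - Real.exp (b * h / 2 * (V y - V x))))
          + b * h / 4 * ∑ x, μ h x * (∑ y, W x y * (V y - V x)))
      =o[nhds 0] (fun h : ℝ => h ^ 2) := by
  have hremainder : ∀ h : ℝ,
      (∑ x, ∑ y, μ h x * W x y * (1 - Real.exp (b * h / 2 * (V y - V x))))
          + b * h / 4 * ∑ x, μ h x * (∑ y, W x y * (V y - V x))
        = ∑ x, ∑ y, μ h x * W x y * expTrapezoidError (b * h / 2 * (V y - V x)) := fun h ↦ by
    rw [show b * h / 4 = b * h / 2 / 2 by ring]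
    exact sum_one_sub_exp_add_half_mul_generator_eq (μ h) W V _ (hμstat h V)
  simp only [hremainder]
  refine IsLittleO.fun_sum fun x _ ↦ IsLittleO.fun_sum fun y _ ↦ ?_
  have hE : (fun h ↦ expTrapezoidError (b * h / 2 * (V y - V x))) =o[𝓝 0] fun h ↦ h ^ 2 := by
    convert expTrapezoidError_comp_const_mul_isLittleO (b / 2 * (V y - V x)) using 3; ring
  simpa [mul_assoc] using
    (isBigO_one_of_forall_mem_stdSimplex hμprob x).mul_isLittleO (hE.const_mul_left (W x y))

/-- Proposition 3: if for each `h` the distribution `μ h` is stationary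
for the perturbed rates `W x y * exp ((b h / 2) (V y - V x))`, then the quantity
`F h = ∑_{x,y} μ h x * W x y * (1 - exp ((b h / 2) (V y - V x)))` satisfies
`F h = -(b h / 4) ∑ x, μ h x * (L V) x + o(h²)` as `h → 0`. -/
theorem dynamical_fluctuation_functional_expansion
    {K : Type*} [Fintype K] [Nonempty K]
    (W : K → K → ℝ) (hW : ∀ x y : K, x ≠ y → 0 ≤ W x y)
    (b : ℝ) (V : K → ℝ)
    (μ : ℝ → K → ℝ)
    (hμprob : ∀ h : ℝ, (∀ x, 0 ≤ μ h x) ∧ ∑ x, μ h x = 1)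
    (hμstat : ∀ h : ℝ, ∀ f : K → ℝ,
      ∑ x, μ h x *
        (∑ y, (W x y * Real.exp (b * h / 2 * (V y - V x))) * (f y - f x)) = 0) :
    (fun h : ℝ =>
        (∑ x, ∑ y, μ h x * W x y * (1 - Real.exp (b * h / 2 * (V y - V x))))
          + b * h / 4 * ∑ x, μ h x * (∑ y, W x y * (V y - V x)))
      =o[nhds 0] (fun h : ℝ => h ^ 2) :=
  dynamical_fluctuation_functional_expansion_general W b V μ hμprob hμstat
end
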